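/- arXiv:1203.5801 — 2 statements merged into one kernel-verified Lean document; each statement's English description precedes it below -/
import Mathlib

section
/- For a string s ∈ Σ^n, let L_j(s) and R_j(s) denote the number of l's and r's among the first j letters of s, let p(s) = max_{0 ≤ j ≤ n} (R_j(s) − L_j(s)) (an integer valued maximum, which is ≥ 0), and let d(s) = L_n(s) − R_n(s). Then s is equivalent under the local moves to c_{p,q} if and only if p(s) = p and d(s) = q − p. In particular, two strings s, t ∈ Σ^n are equivalent iff p(s) = p(t) and d(s) = d(t). -/
/-- The three-letter alphabet `Σ = {0, l, r}` (named `Tri` to avoid a clash with Mathlib). -/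
inductive Tri : Type
  | zero : Tri
  | left : Tri
  | right : Tri
  deriving DecidableEq

/-- One local move: `00 ↔ lr`, `0l ↔ l0`, or `0r ↔ r0`, applied at some pair of
consecutive positions. -/
def Move (s t : List Tri) : Prop :=
  ∃ u v : List Tri,
    (s = u ++ [Tri.zero, Tri.zero] ++ v ∧ t = u ++ [Tri.left, Tri.right] ++ v) ∨
    (s = u ++ [Tri.left, Tri.right] ++ v ∧ t = u ++ [Tri.zero, Tri.zero] ++ v) ∨
    (s = u ++ [Tri.zero, Tri.left] ++ v ∧ t = u ++ [Tri.left, Tri.zero] ++ v) ∨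
    (s = u ++ [Tri.left, Tri.zero] ++ v ∧ t = u ++ [Tri.zero, Tri.left] ++ v) ∨
    (s = u ++ [Tri.zero, Tri.right] ++ v ∧ t = u ++ [Tri.right, Tri.zero] ++ v) ∨
    (s = u ++ [Tri.right, Tri.zero] ++ v ∧ t = u ++ [Tri.zero, Tri.right] ++ v)

/-- Equivalence of strings: `s ~ t` iff `t` can be obtained from `s` by a finite
sequence of local moves. -/
def MoveEquiv (s t : List Tri) : Prop := Relation.ReflTransGen Move s t

/-- The canonical string `c_{p,q}` of length `n`: `p` letters `r`, followed by
`n - p - q` letters `0`, followed by `q` letters `l`. -/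
def cStr (n p q : ℕ) : List Tri :=
  List.replicate p Tri.right ++ List.replicate (n - p - q) Tri.zero ++
    List.replicate q Tri.left

/-- `p(s) = max_{0 ≤ j ≤ n} (R_j(s) - L_j(s))`, where `L_j(s)` and `R_j(s)` are the
numbers of `l`'s and `r`'s among the first `j` letters of `s`. -/
def pval (s : List Tri) : ℤ :=
  Finset.sup' (Finset.range (s.length + 1)) ⟨0, by simp⟩
    (fun j => ((s.take j).count Tri.right : ℤ) - ((s.take j).count Tri.left : ℤ))

/-- `d(s) = L_n(s) - R_n(s)`. -/
def dval (s : List Tri) : ℤ :=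
  (s.count Tri.left : ℤ) - (s.count Tri.right : ℤ)

-- auxiliary
def delta : Tri → ℤ
  | Tri.zero => 0
  | Tri.left => -1
  | Tri.right => 1

def pv : List Tri → ℤ
  | [] => 0
  | a :: s => max 0 (delta a + pv s)

lemma pv_nonneg (s : List Tri) : 0 ≤ pv s := by
  cases s <;> simp [pv]

lemma pval_nil : pval [] = 0 := by simp [pval]

lemma pval_cons (a : Tri) (s : List Tri) :
    pval (a :: s) = max 0 (delta a + pval s) := by
  have hcount : ∀ (k : ℕ), (((a :: s).take (k+1)).count Tri.right : ℤ) -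
      (((a :: s).take (k+1)).count Tri.left : ℤ) =
      delta a + (((s.take k).count Tri.right : ℤ) - ((s.take k).count Tri.left : ℤ)) := by
    intro k
    cases a <;> simp [List.count_cons, delta] <;> push_cast <;> ring
  apply le_antisymm
  · apply Finset.sup'_le
    intro j hj
    match j with
    | 0 => simp
    | (k+1) =>
      rw [hcount k]
      have hk : k ∈ Finset.range (s.length + 1) := by
        simp at hj ⊢; omega
      have := Finset.le_sup' (f := fun j => ((s.take j).count Tri.right : ℤ) - ((s.take j).count Tri.left : ℤ)) hk
      calc delta a + _ ≤ delta a + pval s := by exact (add_le_add_iff_left _).mpr this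
        _ ≤ max 0 (delta a + pval s) := le_max_right _ _
  · apply max_le
    · have h0 : (0:ℕ) ∈ Finset.range ((a::s).length + 1) := by simp
      have := Finset.le_sup' (f := fun j => ((((a::s)).take j).count Tri.right : ℤ) - ((((a::s)).take j).count Tri.left : ℤ)) h0
      refine le_trans ?_ this
      simp
    · obtain ⟨j0, hj0, hEq⟩ := Finset.exists_mem_eq_sup' (Finset.nonempty_range_add_one (n := s.length))
        (fun j => ((s.take j).count Tri.right : ℤ) - ((s.take j).count Tri.left : ℤ))
      have hmem : j0 + 1 ∈ Finset.range ((a::s).length + 1) := by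
        simp only [Finset.mem_range, List.length_cons] at hj0 ⊢; omega
      have := Finset.le_sup' (f := fun j => ((((a::s)).take j).count Tri.right : ℤ) - ((((a::s)).take j).count Tri.left : ℤ)) hmem
      rw [hcount j0] at this
      calc delta a + pval s = delta a + _ := by rw [show pval s = _ from hEq]
        _ ≤ _ := this

lemma pval_eq_pv (s : List Tri) : pval s = pv s := by
  induction s with
  | nil => simpa [pv] using pval_nil
  | cons a s ih => rw [pval_cons, ih]; rfl

lemma move_cons (a : Tri) {s t : List Tri} (h : Move s t) : Move (a :: s) (a :: t) := by
  obtain ⟨u, v, h⟩ := h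
  refine ⟨a :: u, v, ?_⟩
  rcases h with ⟨h1,h2⟩|⟨h1,h2⟩|⟨h1,h2⟩|⟨h1,h2⟩|⟨h1,h2⟩|⟨h1,h2⟩ <;> subst h1 <;> subst h2 <;>
    simp <;> tauto

lemma moveEquiv_cons (a : Tri) {s t : List Tri} (h : MoveEquiv s t) :
    MoveEquiv (a :: s) (a :: t) :=
  Relation.ReflTransGen.lift (a :: ·) (fun _ _ hm => move_cons a hm) _ _ h

lemma move_symm : Symmetric Move := by
  rintro s t ⟨u, v, h⟩
  exact ⟨u, v, by tauto⟩

lemma moveEquiv_symm {s t : List Tri} (h : MoveEquiv s t) : MoveEquiv t s :=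
  (@Relation.ReflTransGen.symmetric _ Move ⟨fun _ _ hm => move_symm hm⟩).symm _ _ h

lemma pv_append_congr {x y : List Tri} (u : List Tri) (h : pv x = pv y) :
    pv (u ++ x) = pv (u ++ y) := by
  induction u with
  | nil => simpa using h
  | cons a u ih => simp [pv, ih]

lemma move_inv {s t : List Tri} (h : Move s t) :
    pv s = pv t ∧ dval s = dval t ∧ s.length = t.length := by
  obtain ⟨u, v, h⟩ := h
  rcases h with ⟨h1,h2⟩|⟨h1,h2⟩|⟨h1,h2⟩|⟨h1,h2⟩|⟨h1,h2⟩|⟨h1,h2⟩ <;> subst h1 <;> subst h2 <;>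
    refine ⟨by simp only [List.append_assoc]; exact pv_append_congr u (by
        have := pv_nonneg v; simp [pv, delta]; omega),
      by simp [dval, List.count_append, List.count_cons] <;> omega, by simp⟩

lemma equiv_inv {s t : List Tri} (h : MoveEquiv s t) :
    pv s = pv t ∧ dval s = dval t ∧ s.length = t.length := by
  induction h with
  | refl => exact ⟨rfl, rfl, rfl⟩
  | tail _ h2 ih =>
    obtain ⟨a, b, c⟩ := move_inv h2
    exact ⟨ih.1.trans a, ih.2.1.trans b, ih.2.2.trans c⟩

lemma zero_right (k : ℕ) (w : List Tri) :
    MoveEquiv (Tri.zero :: (List.replicate k Tri.right ++ w))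
      (List.replicate k Tri.right ++ (Tri.zero :: w)) := by
  induction k with
  | zero => exact Relation.ReflTransGen.refl
  | succ k ih =>
    have m1 : Move (Tri.zero :: Tri.right :: (List.replicate k Tri.right ++ w))
        (Tri.right :: Tri.zero :: (List.replicate k Tri.right ++ w)) :=
      ⟨[], List.replicate k Tri.right ++ w, by tauto⟩
    have step2 := moveEquiv_cons Tri.right ih
    simp only [List.replicate_succ, List.cons_append]
    exact (Relation.ReflTransGen.single m1).trans step2

lemma left_zero (m : ℕ) (w : List Tri) :
    MoveEquiv (Tri.left :: (List.replicate m Tri.zero ++ w))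
      (List.replicate m Tri.zero ++ (Tri.left :: w)) := by
  induction m with
  | zero => exact Relation.ReflTransGen.refl
  | succ m ih =>
    have m1 : Move (Tri.left :: Tri.zero :: (List.replicate m Tri.zero ++ w))
        (Tri.zero :: Tri.left :: (List.replicate m Tri.zero ++ w)) :=
      ⟨[], List.replicate m Tri.zero ++ w, by tauto⟩
    have step2 := moveEquiv_cons Tri.zero ih
    simp only [List.replicate_succ, List.cons_append]
    exact (Relation.ReflTransGen.single m1).trans step2

lemma pv_cStr (n p q : ℕ) : pv (cStr n p q) = p := by
  have h3 : ∀ k, pv (List.replicate k Tri.left) = 0 := by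
    intro k; induction k with
    | zero => rfl
    | succ k ih => simp [List.replicate_succ, pv, delta, ih]
  have h2 : ∀ k w, pv (List.replicate k Tri.zero ++ w) = pv w := by
    intro k w; induction k with
    | zero => rfl
    | succ k ih => simp [List.replicate_succ, pv, delta, ih, pv_nonneg w]
  have h1 : ∀ k w, pv (List.replicate k Tri.right ++ w) = k + pv w := by
    intro k w; induction k with
    | zero => simp [pv]
    | succ k ih =>
      have h0 : (0:ℤ) ≤ pv (List.replicate k Tri.right ++ w) := pv_nonneg _
      simp [List.replicate_succ, pv, delta, ih] at h0 ⊢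
      push_cast
      omega
  simp [cStr, h1, h2, h3]

lemma dval_cStr (n p q : ℕ) : dval (cStr n p q) = (q : ℤ) - (p : ℤ) := by
  simp [dval, cStr, List.count_append, List.count_replicate]

lemma length_cStr {n p q : ℕ} (h : p + q ≤ n) : (cStr n p q).length = n := by
  simp [cStr]; omega

lemma moveNormalize (s : List Tri) :
    ∃ P Q, P + Q ≤ s.length ∧ MoveEquiv s (cStr s.length P Q) := by
  induction s with
  | nil => exact ⟨0, 0, le_refl 0, by simp [cStr]; exact Relation.ReflTransGen.refl⟩
  | cons a s ih =>
    obtain ⟨P, Q, hPQ, hs⟩ := ih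
    set n := s.length with hn
    have hcons : MoveEquiv (a :: s) (a :: cStr n P Q) := moveEquiv_cons a hs
    cases a with
    | right =>
      refine ⟨P + 1, Q, by simp; omega, ?_⟩
      have : Tri.right :: cStr n P Q = cStr (n + 1) (P + 1) Q := by
        simp [cStr, List.replicate_succ, Nat.succ_sub_succ]
      simpa [this] using hcons
    | zero =>
      refine ⟨P, Q, by simp; omega, ?_⟩
      have h2 : MoveEquiv (Tri.zero :: cStr n P Q)
          (List.replicate P Tri.right ++ (Tri.zero ::
            (List.replicate (n - P - Q) Tri.zero ++ List.replicate Q Tri.left))) := by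
        simpa [cStr] using zero_right P (List.replicate (n - P - Q) Tri.zero ++ List.replicate Q Tri.left)
      have heq : List.replicate P Tri.right ++ (Tri.zero ::
            (List.replicate (n - P - Q) Tri.zero ++ List.replicate Q Tri.left)) =
          cStr (n + 1) P Q := by
        have : n + 1 - P - Q = (n - P - Q) + 1 := by omega
        simp [cStr, this, List.replicate_succ]
      rw [heq] at h2
      exact hcons.trans h2
    | left =>
      cases P with
      | zero =>
        refine ⟨0, Q + 1, by simp; omega, ?_⟩
        have h2 : MoveEquiv (Tri.left :: cStr n 0 Q)
            (List.replicate (n - Q) Tri.zero ++ (Tri.left :: List.replicate Q Tri.left)) := by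
          simpa [cStr] using left_zero (n - 0 - Q) (List.replicate Q Tri.left)
        have heq : List.replicate (n - Q) Tri.zero ++ (Tri.left :: List.replicate Q Tri.left) =
            cStr (n + 1) 0 (Q + 1) := by
          have : n + 1 - 0 - (Q + 1) = n - Q := by omega
          simp [cStr, this, List.replicate_succ]
        rw [heq] at h2
        exact hcons.trans h2
      | succ P' =>
        refine ⟨P', Q, by simp; omega, ?_⟩
        set v := List.replicate P' Tri.right ++
          (List.replicate (n - (P' + 1) - Q) Tri.zero ++ List.replicate Q Tri.left) with hv
        have hc : Tri.left :: cStr n (P' + 1) Q = Tri.left :: Tri.right :: v := by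
          simp [cStr, hv, List.replicate_succ]
        have m1 : Move (Tri.left :: Tri.right :: v) (Tri.zero :: Tri.zero :: v) :=
          ⟨[], v, by tauto⟩
        have h2 : MoveEquiv (Tri.zero :: v)
            (List.replicate P' Tri.right ++ (Tri.zero ::
              (List.replicate (n - (P' + 1) - Q) Tri.zero ++ List.replicate Q Tri.left))) :=
          zero_right P' _
        have h3 := moveEquiv_cons Tri.zero h2
        have h4 : MoveEquiv (Tri.zero :: (List.replicate P' Tri.right ++
            (Tri.zero :: (List.replicate (n - (P' + 1) - Q) Tri.zero ++ List.replicate Q Tri.left))))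
            (List.replicate P' Tri.right ++ (Tri.zero :: Tri.zero ::
              (List.replicate (n - (P' + 1) - Q) Tri.zero ++ List.replicate Q Tri.left))) :=
          zero_right P' _
        have heq : List.replicate P' Tri.right ++ (Tri.zero :: Tri.zero ::
              (List.replicate (n - (P' + 1) - Q) Tri.zero ++ List.replicate Q Tri.left)) =
            cStr (n + 1) P' Q := by
          have : n + 1 - P' - Q = (n - (P' + 1) - Q) + 2 := by omega
          simp [cStr, this, List.replicate_succ]
        rw [heq] at h4
        have hlen : (Tri.left :: s).length = n + 1 := by simp [hn]
        rw [hlen]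
        refine hcons.trans ?_
        rw [hc]
        exact (Relation.ReflTransGen.single m1).trans (h3.trans h4)

/-- `s` is equivalent to `c_{p,q}` iff `p(s) = p` and `d(s) = q - p`; in particular,
two strings of length `n` are equivalent iff they have the same `p` and `d` values. -/
theorem stmt2 (n : ℕ) (s t : List Tri) (hs : s.length = n) (ht : t.length = n)
    (p q : ℕ) (hpq : p + q ≤ n) :
    (MoveEquiv s (cStr n p q) ↔ pval s = (p : ℤ) ∧ dval s = (q : ℤ) - (p : ℤ)) ∧
    (MoveEquiv s t ↔ pval s = pval t ∧ dval s = dval t) := by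
  constructor
  · constructor
    · intro h
      have inv := equiv_inv h
      refine ⟨?_, inv.2.1.trans (dval_cStr n p q)⟩
      rw [pval_eq_pv, inv.1, pv_cStr]
    · rintro ⟨hp, hd⟩
      obtain ⟨P, Q, hPQ, hnorm⟩ := moveNormalize s
      rw [hs] at hPQ hnorm
      have inv := equiv_inv hnorm
      rw [pval_eq_pv] at hp
      have h1 : (P : ℤ) = (p : ℤ) := by
        have := inv.1; rw [pv_cStr] at this; omega
      have h2 : (Q : ℤ) = (q : ℤ) := by
        have := inv.2.1; rw [dval_cStr] at this; omega
      have hP : P = p := by exact_mod_cast h1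
      have hQ : Q = q := by exact_mod_cast h2
      rw [hP, hQ] at hnorm
      exact hnorm
  · constructor
    · intro h
      have inv := equiv_inv h
      exact ⟨by rw [pval_eq_pv, pval_eq_pv, inv.1], inv.2.1⟩
    · rintro ⟨hp, hd⟩
      obtain ⟨P, Q, hPQ, hns⟩ := moveNormalize s
      obtain ⟨P', Q', hPQ', hnt⟩ := moveNormalize t
      rw [hs] at hns
      rw [ht] at hnt
      have invs := equiv_inv hns
      have invt := equiv_inv hnt
      rw [pval_eq_pv, pval_eq_pv] at hp
      have e1 : (P : ℤ) = (P' : ℤ) := by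
        have a1 := invs.1; have a2 := invt.1
        rw [pv_cStr] at a1 a2; omega
      have e2 : (Q : ℤ) = (Q' : ℤ) := by
        have a1 := invs.2.1; have a2 := invt.2.1
        rw [dval_cStr] at a1 a2; omega
      have hP : P = P' := by exact_mod_cast e1
      have hQ : Q = Q' := by exact_mod_cast e2
      rw [hP, hQ] at hns
      exact hns.trans (moveEquiv_symm hnt)
end

section
/- Let n ≥ 2 and let M_k denote the k-th Motzkin number. For 1 ≤ j ≤ n − 1 set α_j = sqrt(M_{n−j−1}/(2·M_{n−j})) and β_j = sqrt(M_{j−1}/(2·M_j)), and define the real symmetric n×n matrix H = Σ_{j=1}^{n−1} v_j v_j^T, where v_j = α_j e_j − β_j e_{j+1} and e_1, …, e_n is the standard basis of ℝ^n. Then the vector g ∈ ℝ^n with components g_j = sqrt(M_{j−1}·M_{n−j}) satisfies H·g = 0, and the kernel of H is one-dimensional, spanned by g. -/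
/-- A string is a Motzkin path iff every prefix contains at least as many `l`'s as
`r`'s and the total number of `l`'s equals the total number of `r`'s. -/
def IsMotzkin (s : List Tri) : Prop :=
  (∀ j : ℕ, (s.take j).count Tri.right ≤ (s.take j).count Tri.left) ∧
    s.count Tri.left = s.count Tri.right

/-- The `k`-th Motzkin number: the number of Motzkin paths in `Σ^k` (`M_0 = 1`). -/
noncomputable def motzkinNum (k : ℕ) : ℕ :=
  Set.ncard {s : List Tri | s.length = k ∧ IsMotzkin s}

/-- `α_j = sqrt(M_{n-j-1}/(2·M_{n-j}))` for `1 ≤ j ≤ n-1`. -/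
noncomputable def alphaCoef (n j : ℕ) : ℝ :=
  Real.sqrt ((motzkinNum (n - j - 1) : ℝ) / (2 * (motzkinNum (n - j) : ℝ)))

/-- `β_j = sqrt(M_{j-1}/(2·M_j))` for `1 ≤ j ≤ n-1`. -/
noncomputable def betaCoef (j : ℕ) : ℝ :=
  Real.sqrt ((motzkinNum (j - 1) : ℝ) / (2 * (motzkinNum j : ℝ)))

/-- `v_j = α_j e_j - β_j e_{j+1} ∈ ℝ^n` (here `j` is 1-based, so the standard basis
vector `e_j` corresponds to the coordinate `i : Fin n` with `i + 1 = j`). -/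
noncomputable def vVec (n j : ℕ) : Fin n → ℝ := fun i =>
  if (i : ℕ) + 1 = j then alphaCoef n j
  else if (i : ℕ) = j then -betaCoef j
  else 0

/-- The real symmetric `n×n` matrix `H = Σ_{j=1}^{n-1} v_j v_jᵀ`. -/
noncomputable def hMat (n : ℕ) : Matrix (Fin n) (Fin n) ℝ :=
  ∑ j ∈ Finset.Icc 1 (n - 1), Matrix.vecMulVec (vVec n j) (vVec n j)

/-- The vector `g ∈ ℝ^n` with components `g_j = sqrt(M_{j-1}·M_{n-j})` (1-based `j`,
so the `i`-th coordinate is `sqrt(M_i · M_{n-1-i})` for `i : Fin n`). -/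
noncomputable def gVec (n : ℕ) : Fin n → ℝ := fun i =>
  Real.sqrt ((motzkinNum (i : ℕ) : ℝ) * (motzkinNum (n - 1 - (i : ℕ)) : ℝ))

open Matrix

instance : Fintype Tri :=
  ⟨{Tri.zero, Tri.left, Tri.right}, by intro x; cases x <;> simp⟩

lemma motzkin_pos (k : ℕ) : 0 < motzkinNum k := by
  have hfin : {s : List Tri | s.length = k ∧ IsMotzkin s}.Finite :=
    (List.finite_length_eq Tri k).subset (fun s hs => hs.1)
  rw [motzkinNum, Set.ncard_pos hfin]
  refine ⟨List.replicate k Tri.zero, by simp, ?_, ?_⟩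
  · intro j
    simp [List.take_replicate, List.count_replicate]
  · simp [List.count_replicate]

lemma motzkin_pos' (k : ℕ) : (0 : ℝ) < (motzkinNum k : ℝ) := by
  exact_mod_cast motzkin_pos k

lemma alpha_pos (n j : ℕ) : 0 < alphaCoef n j :=
  Real.sqrt_pos.mpr (div_pos (motzkin_pos' _) (mul_pos two_pos (motzkin_pos' _)))

lemma beta_pos (j : ℕ) : 0 < betaCoef j :=
  Real.sqrt_pos.mpr (div_pos (motzkin_pos' _) (mul_pos two_pos (motzkin_pos' _)))

lemma gVec_pos (n : ℕ) (i : Fin n) : 0 < gVec n i :=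
  Real.sqrt_pos.mpr (mul_pos (motzkin_pos' _) (motzkin_pos' _))

lemma dot_vVec (n j : ℕ) (h1 : 1 ≤ j) (h2 : j ≤ n - 1) (hn : 2 ≤ n) (x : Fin n → ℝ) :
    vVec n j ⬝ᵥ x =
      alphaCoef n j * x ⟨j - 1, by omega⟩ - betaCoef j * x ⟨j, by omega⟩ := by
  have hab : (⟨j - 1, by omega⟩ : Fin n) ≠ ⟨j, by omega⟩ := by
    simp [Fin.ext_iff]; omega
  rw [dotProduct, ← Finset.sum_subset
      (Finset.subset_univ ({⟨j - 1, by omega⟩, ⟨j, by omega⟩} : Finset (Fin n)))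
      (fun i _ hi => ?_), Finset.sum_pair hab]
  · have e1 : vVec n j ⟨j - 1, by omega⟩ = alphaCoef n j := by
      simp only [vVec]
      rw [if_pos (by omega)]
    have e2 : vVec n j ⟨j, by omega⟩ = -betaCoef j := by
      simp only [vVec]
      rw [if_neg (by omega)]
      simp
    rw [e1, e2]; ring
  · have hi1 : (i : ℕ) + 1 ≠ j := by
      intro h; apply hi; simp [Fin.ext_iff]; omega
    have hi2 : (i : ℕ) ≠ j := by
      intro h; apply hi; simp [Fin.ext_iff]; omega
    simp [vVec, hi1, hi2]

lemma dot_vVec_gVec (n j : ℕ) (h1 : 1 ≤ j) (h2 : j ≤ n - 1) (hn : 2 ≤ n) :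
    vVec n j ⬝ᵥ gVec n = 0 := by
  rw [dot_vVec n j h1 h2 hn]
  simp only [gVec]
  have e1 : n - 1 - (j - 1) = n - j := by omega
  have e2 : n - 1 - j = n - j - 1 := by omega
  rw [e1, e2]
  rw [alphaCoef, betaCoef, ← Real.sqrt_mul (by positivity), ← Real.sqrt_mul (by positivity)]
  rw [sub_eq_zero]
  congr 1
  have h3 : (motzkinNum (n - j) : ℝ) ≠ 0 := (motzkin_pos' _).ne'
  have h4 : (motzkinNum j : ℝ) ≠ 0 := (motzkin_pos' _).ne'
  field_simp

lemma hMat_mulVec (n : ℕ) (x : Fin n → ℝ) (i : Fin n) :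
    (hMat n *ᵥ x) i = ∑ j ∈ Finset.Icc 1 (n - 1), (vVec n j ⬝ᵥ x) * vVec n j i := by
  simp only [hMat, mulVec, dotProduct, Matrix.sum_apply, vecMulVec_apply, Finset.sum_mul]
  rw [Finset.sum_comm]
  refine Finset.sum_congr rfl (fun j _ => ?_)
  exact Finset.sum_congr rfl (fun k _ => by ring)

lemma hMat_mulVec_gVec (n : ℕ) (hn : 2 ≤ n) : hMat n *ᵥ gVec n = 0 := by
  funext i
  rw [hMat_mulVec]
  refine Finset.sum_eq_zero (fun j hj => ?_)
  rw [Finset.mem_Icc] at hj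
  rw [dot_vVec_gVec n j hj.1 hj.2 hn, zero_mul]

lemma quad_form (n : ℕ) (x : Fin n → ℝ) :
    x ⬝ᵥ (hMat n *ᵥ x) = ∑ j ∈ Finset.Icc 1 (n - 1), (vVec n j ⬝ᵥ x) ^ 2 := by
  simp only [hMat_mulVec, dotProduct, Finset.mul_sum]
  rw [Finset.sum_comm]
  refine Finset.sum_congr rfl (fun j _ => ?_)
  calc ∑ i : Fin n, x i * ((∑ k : Fin n, vVec n j k * x k) * vVec n j i)
      = ∑ i : Fin n, (vVec n j i * x i) * (∑ k : Fin n, vVec n j k * x k) := by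
        exact Finset.sum_congr rfl (fun i _ => by ring)
    _ = (∑ i : Fin n, vVec n j i * x i) * (∑ k : Fin n, vVec n j k * x k) :=
        (Finset.sum_mul _ _ _).symm
    _ = (∑ k : Fin n, vVec n j k * x k) ^ 2 := by rw [pow_two]

lemma ker_dots (n : ℕ) (hn : 2 ≤ n) (x : Fin n → ℝ) (hx : hMat n *ᵥ x = 0)
    (j : ℕ) (h1 : 1 ≤ j) (h2 : j ≤ n - 1) : vVec n j ⬝ᵥ x = 0 := by
  have hq : ∑ j ∈ Finset.Icc 1 (n - 1), (vVec n j ⬝ᵥ x) ^ 2 = 0 := by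
    rw [← quad_form, hx]; simp
  have := (Finset.sum_eq_zero_iff_of_nonneg (fun j _ => sq_nonneg _)).mp hq j
    (Finset.mem_Icc.mpr ⟨h1, h2⟩)
  exact pow_eq_zero_iff (by norm_num) |>.mp this

lemma ker_scalar (n : ℕ) (hn : 2 ≤ n) (x : Fin n → ℝ) (hx : hMat n *ᵥ x = 0) :
    x = (x ⟨0, by omega⟩ / gVec n ⟨0, by omega⟩) • gVec n := by
  have key : ∀ m (hm : m < n),
      x ⟨m, hm⟩ * gVec n ⟨0, by omega⟩ = x ⟨0, by omega⟩ * gVec n ⟨m, hm⟩ := by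
    intro m
    induction m with
    | zero => intro hm; ring
    | succ m ih =>
      intro hm
      have hj1 : 1 ≤ m + 1 := by omega
      have hj2 : m + 1 ≤ n - 1 := by omega
      have hdx := ker_dots n hn x hx (m + 1) hj1 hj2
      rw [dot_vVec n (m + 1) hj1 hj2 hn, sub_eq_zero] at hdx
      have hdg := dot_vVec_gVec n (m + 1) hj1 hj2 hn
      rw [dot_vVec n (m + 1) hj1 hj2 hn, sub_eq_zero] at hdg
      have hb : betaCoef (m + 1) ≠ 0 := (beta_pos _).ne'
      apply mul_left_cancel₀ hb
      calc betaCoef (m + 1) * (x ⟨m + 1, hm⟩ * gVec n ⟨0, by omega⟩)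
          = (betaCoef (m + 1) * x ⟨m + 1, hm⟩) * gVec n ⟨0, by omega⟩ := by ring
        _ = (alphaCoef n (m + 1) * x ⟨m + 1 - 1, by omega⟩) * gVec n ⟨0, by omega⟩ := by
            rw [← hdx]
        _ = alphaCoef n (m + 1) * (x ⟨m, by omega⟩ * gVec n ⟨0, by omega⟩) := by
            norm_num; ring
        _ = alphaCoef n (m + 1) * (x ⟨0, by omega⟩ * gVec n ⟨m, by omega⟩) := by
            rw [ih (by omega)]
        _ = x ⟨0, by omega⟩ * (alphaCoef n (m + 1) * gVec n ⟨m + 1 - 1, by omega⟩) := by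
            norm_num; ring
        _ = x ⟨0, by omega⟩ * (betaCoef (m + 1) * gVec n ⟨m + 1, by omega⟩) := by
            rw [← hdg]
        _ = betaCoef (m + 1) * (x ⟨0, by omega⟩ * gVec n ⟨m + 1, hm⟩) := by ring
  funext i
  have hg0 : gVec n ⟨0, by omega⟩ ≠ 0 := (gVec_pos n _).ne'
  have := key i.val i.isLt
  simp only [Fin.eta] at this
  simp only [Pi.smul_apply, smul_eq_mul]
  field_simp
  linarith [this]

/-- `H·g = 0`, and the kernel of `H` is one-dimensional, spanned by `g`. -/
theorem stmt18 (n : ℕ) (hn : 2 ≤ n) :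
    (hMat n).mulVec (gVec n) = 0 ∧
    LinearMap.ker (hMat n).mulVecLin = Submodule.span ℝ {gVec n} ∧
    Module.finrank ℝ (LinearMap.ker (hMat n).mulVecLin) = 1 := by
  have hg0 : gVec n ≠ 0 := by
    intro h
    have := gVec_pos n ⟨0, by omega⟩
    rw [h] at this
    exact lt_irrefl 0 this
  have h1 : (hMat n).mulVec (gVec n) = 0 := hMat_mulVec_gVec n hn
  have h2 : LinearMap.ker (hMat n).mulVecLin = Submodule.span ℝ {gVec n} := by
    apply le_antisymm
    · intro x hx
      rw [LinearMap.mem_ker, Matrix.mulVecLin_apply] at hx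
      rw [Submodule.mem_span_singleton]
      exact ⟨x ⟨0, by omega⟩ / gVec n ⟨0, by omega⟩, (ker_scalar n hn x hx).symm⟩
    · rw [Submodule.span_singleton_le_iff_mem, LinearMap.mem_ker, Matrix.mulVecLin_apply]
      exact h1
  refine ⟨h1, h2, ?_⟩
  rw [h2]
  exact finrank_span_singleton hg0
end
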